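/- arXiv:1001.1242 — 6 statements merged into one kernel-verified Lean document; each statement's English description precedes it below -/
import Mathlib

section
/- Let A be the ℂ-algebra generated by g_{ij}, 1 ≤ i,j ≤ n, with relations g_{ij} g_{kl} = Q²_{ij;kl} g_{kl} g_{ij}, where Q_{ij;kl} = q_{ki} q_{jl} and q_{ij} = exp((i/2)θ^{ij}) for a skew-symmetric complex matrix θ. Then the quantum determinant det_θ = ∑_{σ∈S_n} sgn(σ) (∏_{j=1}^{n-1} ∏_{i=1}^{n-j} Q_{i+j,σ(i+j);j,σ(j)}) g_{1σ(1)} ⋯ g_{nσ(n)} satisfies det_θ · g_{kl} = (∏_{i=1}^n Q²_{ii;kl}) g_{kl} · det_θ for all k,l; in particular det_θ · A = A · det_θ, i.e. det_θ is a normal element. -/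
noncomputable section

/-- `q_{ij} = exp((i/2) θ^{ij})`. -/
def qc {n : ℕ} (θ : Matrix (Fin n) (Fin n) ℂ) (i j : Fin n) : ℂ :=
  Complex.exp (Complex.I / 2 * θ i j)

/-- `Q_{ij;kl} = q_{ki} q_{jl}`. -/
def Qc {n : ℕ} (θ : Matrix (Fin n) (Fin n) ℂ) (i j k l : Fin n) : ℂ :=
  qc θ k i * qc θ j l

/-- The defining relations `g_{ij} g_{kl} = Q²_{ij;kl} g_{kl} g_{ij}` of the twisted coordinate
algebra of `GL_θ(n)`. -/
inductive GLRel {n : ℕ} (θ : Matrix (Fin n) (Fin n) ℂ) :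
    FreeAlgebra ℂ (Fin n × Fin n) → FreeAlgebra ℂ (Fin n × Fin n) → Prop
  | rel (i j k l : Fin n) :
      GLRel θ (FreeAlgebra.ι ℂ (i, j) * FreeAlgebra.ι ℂ (k, l))
        ((Qc θ i j k l) ^ 2 • (FreeAlgebra.ι ℂ (k, l) * FreeAlgebra.ι ℂ (i, j)))

/-- The ℂ-algebra generated by the `g_{ij}` with the above relations. -/
abbrev GLθ {n : ℕ} (θ : Matrix (Fin n) (Fin n) ℂ) := RingQuot (GLRel θ)

/-- The generator `g_{ij}` in the twisted coordinate algebra. -/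
def gg {n : ℕ} (θ : Matrix (Fin n) (Fin n) ℂ) (i j : Fin n) : GLθ θ :=
  RingQuot.mkAlgHom ℂ (GLRel θ) (FreeAlgebra.ι ℂ (i, j))

/-- The quantum determinant
`det_θ = ∑_{σ∈S_n} sgn(σ) (∏_{a<b} Q_{b σ(b); a σ(a)}) g_{1σ(1)} ⋯ g_{nσ(n)}`,
where the coefficient is the twisted Leibniz weight
`∏_{j=1}^{n-1} ∏_{i=1}^{n-j} Q_{i+j,σ(i+j); j,σ(j)}` rewritten as a product over pairs `a < b`. -/
def detθ {n : ℕ} (θ : Matrix (Fin n) (Fin n) ℂ) : GLθ θ :=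
  ∑ σ : Equiv.Perm (Fin n),
    (((Equiv.Perm.sign σ : ℤ) : ℂ) *
      ∏ p ∈ Finset.univ.filter (fun p : Fin n × Fin n => p.1 < p.2),
        Qc θ p.2 (σ p.2) p.1 (σ p.1)) •
      (List.ofFn fun i : Fin n => gg θ i (σ i)).prod

/-! Moving `g_{kl}` to the left through the monomial `g_{1σ(1)} ⋯ g_{nσ(n)}` produces the
scalar `∏_i Q²_{iσ(i);kl} = ∏_i q²_{ki} q²_{σ(i)l}`, which does not depend on `σ` because `σ`
merely permutes the second factors. Hence `det_θ` skew-commutes with every generator by the same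
nonzero scalar, and an element that skew-commutes with a generating set is normal. -/

section Normal

variable {R A : Type*} [CommSemiring R] [Semiring A] [Algebra R A]

theorem List.prod_ofFn_mul_of_mul_eq_smul_mul {m : ℕ} (f : Fin m → A) (c : Fin m → R) (y : A)
    (h : ∀ i, f i * y = c i • (y * f i)) :
    (List.ofFn f).prod * y = (∏ i, c i) • (y * (List.ofFn f).prod) := by
  induction m with
  | zero => simp
  | succ m ih =>
    rw [List.ofFn_succ, List.prod_cons, Fin.prod_univ_succ, mul_assoc,
      ih (fun i => f i.succ) (fun i => c i.succ) fun i => h i.succ, mul_smul_comm, ← mul_assoc,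
      h 0, smul_mul_assoc, smul_smul, mul_assoc, mul_comm (c 0)]

theorem Algebra.exists_mul_eq_mul_left_of_adjoin_eq_top {s : Set A} (hs : adjoin R s = ⊤)
    (d : A) (h : ∀ x ∈ s, ∃ y, d * x = y * d) (a : A) : ∃ b, d * a = b * d := by
  refine adjoin_induction (p := fun a _ => ∃ b, d * a = b * d) h ?_ ?_ ?_ (hs ▸ mem_top)
  · exact fun r => ⟨algebraMap R A r, (commutes r d).symm⟩
  · rintro x y - - ⟨b, hb⟩ ⟨c, hc⟩
    exact ⟨b + c, by rw [mul_add, hb, hc, add_mul]⟩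
  · rintro x y - - ⟨b, hb⟩ ⟨c, hc⟩
    exact ⟨b * c, by rw [← mul_assoc, hb, mul_assoc, hc, ← mul_assoc]⟩

theorem Algebra.exists_mul_eq_mul_right_of_adjoin_eq_top {s : Set A} (hs : adjoin R s = ⊤)
    (d : A) (h : ∀ x ∈ s, ∃ y, x * d = d * y) (a : A) : ∃ b, a * d = d * b := by
  refine adjoin_induction (p := fun a _ => ∃ b, a * d = d * b) h ?_ ?_ ?_ (hs ▸ mem_top)
  · exact fun r => ⟨algebraMap R A r, commutes r d⟩
  · rintro x y - - ⟨b, hb⟩ ⟨c, hc⟩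
    exact ⟨b + c, by rw [add_mul, hb, hc, mul_add]⟩
  · rintro x y - - ⟨b, hb⟩ ⟨c, hc⟩
    exact ⟨b * c, by rw [mul_assoc, hc, ← mul_assoc, hb, mul_assoc]⟩

end Normal

section TwistedGL

variable {n : ℕ} (θ : Matrix (Fin n) (Fin n) ℂ)

theorem gg_mul_gg (i j k l : Fin n) :
    gg θ i j * gg θ k l = (Qc θ i j k l) ^ 2 • (gg θ k l * gg θ i j) := by
  simpa only [gg, map_mul, map_smul] using RingQuot.mkAlgHom_rel ℂ (GLRel.rel (θ := θ) i j k l)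

theorem adjoin_range_gg :
    Algebra.adjoin ℂ (Set.range fun p : Fin n × Fin n => gg θ p.1 p.2) = ⊤ := by
  have hrange : (Set.range fun p : Fin n × Fin n => gg θ p.1 p.2)
      = RingQuot.mkAlgHom ℂ (GLRel θ) '' Set.range (FreeAlgebra.ι ℂ) := by
    rw [← Set.range_comp]; rfl
  rw [hrange, ← AlgHom.map_adjoin, FreeAlgebra.adjoin_range_ι, Algebra.map_top,
    AlgHom.range_eq_top]
  exact RingQuot.mkAlgHom_surjective ℂ (GLRel θ)

theorem prod_Qc_sq_perm (σ : Equiv.Perm (Fin n)) (k l : Fin n) :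
    ∏ i, (Qc θ i (σ i) k l) ^ 2 = ∏ i, (Qc θ i i k l) ^ 2 := by
  simp only [Qc, mul_pow, Finset.prod_mul_distrib, Equiv.prod_comp σ (fun j => (qc θ j l) ^ 2)]

theorem prod_Qc_sq_ne_zero (k l : Fin n) : ∏ i, (Qc θ i i k l) ^ 2 ≠ 0 :=
  Finset.prod_ne_zero_iff.2 fun _ _ =>
    pow_ne_zero _ (mul_ne_zero (Complex.exp_ne_zero _) (Complex.exp_ne_zero _))

theorem detθ_mul_gg (k l : Fin n) :
    detθ θ * gg θ k l = (∏ i, (Qc θ i i k l) ^ 2) • (gg θ k l * detθ θ) := by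
  rw [detθ, Finset.sum_mul, Finset.mul_sum, Finset.smul_sum]
  refine Finset.sum_congr rfl fun σ _ => ?_
  rw [smul_mul_assoc,
    List.prod_ofFn_mul_of_mul_eq_smul_mul _ _ _ fun i => gg_mul_gg θ i (σ i) k l, prod_Qc_sq_perm,
    mul_smul_comm, smul_smul, smul_smul, mul_comm]

end TwistedGL

theorem detθ_normal_general {n : ℕ} (θ : Matrix (Fin n) (Fin n) ℂ) :
    (∀ k l : Fin n,
      detθ θ * gg θ k l = (∏ i : Fin n, (Qc θ i i k l) ^ 2) • (gg θ k l * detθ θ)) ∧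
    (∀ a : GLθ θ, ∃ b : GLθ θ, detθ θ * a = b * detθ θ) ∧
    (∀ a : GLθ θ, ∃ b : GLθ θ, a * detθ θ = detθ θ * b) := by
  refine ⟨detθ_mul_gg θ, ?_, ?_⟩
  · refine Algebra.exists_mul_eq_mul_left_of_adjoin_eq_top (adjoin_range_gg θ) _ ?_
    rintro _ ⟨⟨k, l⟩, rfl⟩
    exact ⟨(∏ i, (Qc θ i i k l) ^ 2) • gg θ k l, by rw [detθ_mul_gg, smul_mul_assoc]⟩
  · refine Algebra.exists_mul_eq_mul_right_of_adjoin_eq_top (adjoin_range_gg θ) _ ?_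
    rintro _ ⟨⟨k, l⟩, rfl⟩
    refine ⟨(∏ i, (Qc θ i i k l) ^ 2)⁻¹ • gg θ k l, ?_⟩
    rw [mul_smul_comm, detθ_mul_gg, inv_smul_smul₀ (prod_Qc_sq_ne_zero θ k l)]

/-- the quantum determinant satisfies
`det_θ · g_{kl} = (∏_{i=1}^n Q²_{ii;kl}) g_{kl} · det_θ` for all `k, l`; in particular
`det_θ · A = A · det_θ`, i.e. `det_θ` is a normal element. -/
theorem detθ_normal {n : ℕ} (θ : Matrix (Fin n) (Fin n) ℂ)
    (hθ : ∀ i j, θ j i = -θ i j) :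
    (∀ k l : Fin n,
      detθ θ * gg θ k l = (∏ i : Fin n, (Qc θ i i k l) ^ 2) • (gg θ k l * detθ θ)) ∧
    (∀ a : GLθ θ, ∃ b : GLθ θ, detθ θ * a = b * detθ θ) ∧
    (∀ a : GLθ θ, ∃ b : GLθ θ, a * detθ θ = detθ θ * b) :=
  detθ_normal_general θ
end
end

section
/- In the twisted coordinate algebra of GL_θ(n) with relations g_{ij} g_{kl} = Q²_{ij;kl} g_{kl} g_{ij}, the quantum determinant det_θ is central if and only if ∑_{k=1}^n θ^{ki} ≡ ∑_{k=1}^n θ^{kj} (mod 2π) for all i,j = 1,…,n. -/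
noncomputable section

/-!
Moving `g_{kl}` through a Leibniz monomial `∏ᵢ g_{iσ(i)}` produces the scalar
`∏ᵢ Q²_{iσ(i);kl} = exp(i(∑ⱼ θ^{jl} - ∑ⱼ θ^{jk}))`, which does not depend on `σ`; hence
`det_θ g_{kl} = exp(i(∑ⱼ θ^{jl} - ∑ⱼ θ^{jk})) g_{kl} det_θ`, and `det_θ` is central iff all these
scalars are `1`, as soon as `g_{kl} det_θ ≠ 0`. For the latter, let `g_p` act on polynomials by
`x^m ↦ (∏_q Q_{p;q}^{m_q}) x^{m + e_p}`, where `Q_{p;q} = Q_{ij;kl}` for `p = (i, j)`,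
`q = (k, l)`: since `Q_{p;q} Q_{q;p} = 1` this respects the relations,
and it sends the Leibniz monomials to nonzero multiples of pairwise distinct monomials.
-/

open Finsupp

section SkewShift

variable {K ι : Type*} [CommSemiring K] (c : ι → ι → K)

def shiftWeight (p : ι) (m : ι →₀ ℕ) : K :=
  m.prod fun q k => c p q ^ k

lemma shiftWeight_add_single (p q : ι) (m : ι →₀ ℕ) :
    shiftWeight c p (m + single q 1) = shiftWeight c p m * c p q := by
  simp only [shiftWeight]
  rw [prod_add_index' (fun _ => pow_zero _) (fun _ _ _ => pow_add _ _ _)]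
  simp

lemma shiftWeight_ne_zero [NoZeroDivisors K] [Nontrivial K] (hc : ∀ p q, c p q ≠ 0)
    (p : ι) (m : ι →₀ ℕ) : shiftWeight c p m ≠ 0 :=
  Finset.prod_ne_zero_iff.mpr fun q _ => pow_ne_zero _ (hc p q)

/-- Twisted multiplication by the variable `x_p` on the polynomials `K[x_q | q : ι]`. -/
def skewShift (p : ι) : Module.End K ((ι →₀ ℕ) →₀ K) :=
  lsum K fun m => shiftWeight c p m • lsingle (m + single p 1)

lemma skewShift_single (p : ι) (m : ι →₀ ℕ) (a : K) :
    skewShift c p (single m a) = single (m + single p 1) (shiftWeight c p m * a) := by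
  simp [skewShift, smul_single]

lemma smul_skewShift_mul_skewShift (p q : ι) :
    c q p • (skewShift c p * skewShift c q) = c p q • (skewShift c q * skewShift c p) := by
  refine lhom_ext fun m a => ?_
  simp only [LinearMap.smul_apply, Module.End.mul_apply, skewShift_single, smul_single,
    shiftWeight_add_single, add_right_comm m (single p 1)]
  congr 1
  ring

lemma skewShift_mul_skewShift {p q : ι} (h : c p q * c q p = 1) :
    skewShift c p * skewShift c q = c p q ^ 2 • (skewShift c q * skewShift c p) := by
  rw [sq, mul_smul, ← smul_skewShift_mul_skewShift, smul_smul, h, one_smul]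

lemma list_prod_skewShift_single [NoZeroDivisors K] [Nontrivial K] (hc : ∀ p q, c p q ≠ 0)
    (L : List ι) (m : ι →₀ ℕ) : ∃ s ≠ (0 : K),
      (L.map (skewShift c)).prod (single m 1) = single (m + (L.map (single · 1)).sum) s := by
  induction L with
  | nil => exact ⟨1, one_ne_zero, by simp⟩
  | cons p L ih =>
    obtain ⟨s, hs, hL⟩ := ih
    refine ⟨shiftWeight c p (m + (L.map (single · 1)).sum) * s,
      mul_ne_zero (shiftWeight_ne_zero c hc p _) hs, ?_⟩
    rw [List.map_cons, List.prod_cons, Module.End.mul_apply, hL, skewShift_single,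
      List.map_cons, List.sum_cons, add_assoc, add_comm (single p 1)]

end SkewShift

lemma List.prod_ofFn_mul_eq_smul {R A : Type*} [CommSemiring R] [Semiring A] [Algebra R A]
    {m : ℕ} (f : Fin m → A) (y : A) (c : Fin m → R) (h : ∀ i, f i * y = c i • (y * f i)) :
    (List.ofFn f).prod * y = (∏ i, c i) • (y * (List.ofFn f).prod) := by
  induction m with
  | zero => simp
  | succ m ih =>
    rw [List.ofFn_succ, List.prod_cons, Fin.prod_univ_succ, mul_assoc,
      ih (fun i => f i.succ) (fun i => c i.succ) fun i => h i.succ, mul_smul_comm, ← mul_assoc,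
      h 0, smul_mul_assoc, smul_smul, mul_assoc, mul_comm _ (c 0)]

lemma sum_single_graph_injective {α β : Type*} [Fintype α] :
    Function.Injective fun f : α → β => ∑ a, single (a, f a) (1 : ℕ) := by
  classical
  have eval (f : α → β) (a : α) (b : β) :
      (∑ a', single (a', f a') (1 : ℕ)) (a, b) = if f a = b then 1 else 0 := by
    rw [finsetSum_apply, Finset.sum_eq_single a] <;> simp_all [single_apply]
  intro f g hfg
  funext a
  simpa [eval, eq_comm] using congr($hfg (a, f a))

lemma RingQuot.commute_of_commute_mkAlgHom_ι {R X : Type*} [CommSemiring R]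
    {r : FreeAlgebra R X → FreeAlgebra R X → Prop} {z : RingQuot r}
    (h : ∀ x, Commute z (RingQuot.mkAlgHom R r (FreeAlgebra.ι R x))) (a : RingQuot r) :
    Commute z a := by
  obtain ⟨a, rfl⟩ := RingQuot.mkAlgHom_surjective R r a
  induction a using FreeAlgebra.induction with
  | grade0 t => rw [AlgHom.commutes]; exact Algebra.commute_algebraMap_right t z
  | grade1 x => exact h x
  | mul a b ha hb => rw [map_mul]; exact ha.mul_right hb
  | add a b ha hb => rw [map_add]; exact ha.add_right hb

lemma Complex.exp_I_mul_sub_eq_one_iff {a b : ℂ} :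
    exp (I * (a - b)) = 1 ↔ ∃ m : ℤ, a = b + 2 * (Real.pi : ℂ) * m := by
  rw [exp_eq_one_iff]
  refine exists_congr fun m => ?_
  rw [show (m : ℂ) * (2 * Real.pi * I) = I * (2 * Real.pi * m) by ring,
    mul_right_inj' I_ne_zero, sub_eq_iff_eq_add']

namespace GLθ

variable {n : ℕ} {θ : Matrix (Fin n) (Fin n) ℂ}

def Qpair (θ : Matrix (Fin n) (Fin n) ℂ) (p q : Fin n × Fin n) : ℂ :=
  Qc θ p.1 p.2 q.1 q.2

lemma qc_sq (θ : Matrix (Fin n) (Fin n) ℂ) (i j : Fin n) :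
    qc θ i j ^ 2 = Complex.exp (Complex.I * θ i j) := by
  rw [qc, ← Complex.exp_nat_mul]
  ring_nf

lemma Qpair_ne_zero (θ : Matrix (Fin n) (Fin n) ℂ) (p q : Fin n × Fin n) : Qpair θ p q ≠ 0 :=
  mul_ne_zero (Complex.exp_ne_zero _) (Complex.exp_ne_zero _)

lemma Qpair_mul_Qpair_swap (hθ : ∀ i j, θ j i = -θ i j) (p q : Fin n × Fin n) :
    Qpair θ p q * Qpair θ q p = 1 := by
  simp only [Qpair, Qc, qc, ← Complex.exp_add, hθ p.1 q.1, hθ q.2 p.2]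
  ring_nf
  exact Complex.exp_zero

lemma gg_mul_gg (i j k l : Fin n) :
    gg θ i j * gg θ k l = Qc θ i j k l ^ 2 • (gg θ k l * gg θ i j) := by
  simpa only [gg, map_mul, map_smul] using RingQuot.mkAlgHom_rel ℂ (GLRel.rel (θ := θ) i j k l)

lemma prod_Qc_sq_graph (hθ : ∀ i j, θ j i = -θ i j) (σ : Equiv.Perm (Fin n)) (k l : Fin n) :
    ∏ i, Qc θ i (σ i) k l ^ 2 = Complex.exp (Complex.I * (∑ i, θ i l - ∑ i, θ i k)) := by
  have row_sum : ∑ i, θ k i = -∑ i, θ i k := by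
    rw [← Finset.sum_neg_distrib]
    exact Finset.sum_congr rfl fun i _ => hθ i k
  simp only [Qc, mul_pow, qc_sq, ← Complex.exp_add, ← Complex.exp_sum]
  rw [Finset.sum_add_distrib, Equiv.sum_comp σ fun j => Complex.I * θ j l, ← Finset.mul_sum,
    ← Finset.mul_sum, row_sum]
  ring_nf

lemma detθ_mul_gg (hθ : ∀ i j, θ j i = -θ i j) (k l : Fin n) :
    detθ θ * gg θ k l =
      Complex.exp (Complex.I * (∑ i, θ i l - ∑ i, θ i k)) • (gg θ k l * detθ θ) := by
  rw [detθ, Finset.sum_mul, Finset.mul_sum, Finset.smul_sum]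
  refine Finset.sum_congr rfl fun σ _ => ?_
  rw [smul_mul_assoc, List.prod_ofFn_mul_eq_smul _ _ _ fun i => gg_mul_gg i (σ i) k l,
    prod_Qc_sq_graph hθ, smul_comm, mul_smul_comm]

def skewShiftRep (hθ : ∀ i j, θ j i = -θ i j) :
    GLθ θ →ₐ[ℂ] Module.End ℂ ((Fin n × Fin n →₀ ℕ) →₀ ℂ) :=
  RingQuot.liftAlgHom ℂ ⟨FreeAlgebra.lift ℂ (skewShift (Qpair θ)), by
    rintro _ _ ⟨i, j, k, l⟩
    simp only [map_mul, map_smul, FreeAlgebra.lift_ι_apply]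
    exact skewShift_mul_skewShift _ (Qpair_mul_Qpair_swap hθ (i, j) (k, l))⟩

lemma skewShiftRep_gg (hθ : ∀ i j, θ j i = -θ i j) (i j : Fin n) :
    skewShiftRep hθ (gg θ i j) = skewShift (Qpair θ) (i, j) := by
  simp [skewShiftRep, gg]

def leibnizCoeff (θ : Matrix (Fin n) (Fin n) ℂ) (σ : Equiv.Perm (Fin n)) : ℂ :=
  ((Equiv.Perm.sign σ : ℤ) : ℂ) *
    ∏ p ∈ Finset.univ.filter (fun p : Fin n × Fin n => p.1 < p.2), Qc θ p.2 (σ p.2) p.1 (σ p.1)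

lemma detθ_eq_sum (θ : Matrix (Fin n) (Fin n) ℂ) :
    detθ θ = ∑ σ, leibnizCoeff θ σ • (List.ofFn fun i => gg θ i (σ i)).prod :=
  rfl

lemma leibnizCoeff_ne_zero (θ : Matrix (Fin n) (Fin n) ℂ) (σ : Equiv.Perm (Fin n)) :
    leibnizCoeff θ σ ≠ 0 :=
  mul_ne_zero (by simp)
    (Finset.prod_ne_zero_iff.mpr fun p _ => Qpair_ne_zero θ (p.2, σ p.2) (p.1, σ p.1))

lemma gg_mul_detθ_ne_zero (hθ : ∀ i j, θ j i = -θ i j) (k l : Fin n) :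
    gg θ k l * detθ θ ≠ 0 := by
  set ρ := skewShiftRep hθ
  have hword : ∀ σ : Equiv.Perm (Fin n), ∃ s ≠ (0 : ℂ),
      ρ (gg θ k l * (List.ofFn fun i => gg θ i (σ i)).prod) (single 0 1) =
        single (single (k, l) 1 + ∑ i, single (i, σ i) 1) s := by
    intro σ
    have := list_prod_skewShift_single (Qpair θ) (Qpair_ne_zero θ)
      ((k, l) :: List.ofFn fun i => (i, σ i)) 0
    simpa [ρ, map_list_prod, List.map_ofFn, Function.comp_def, skewShiftRep_gg, List.sum_ofFn]
      using this
  choose s hs hword using hword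
  intro h
  let M : Equiv.Perm (Fin n) → Fin n × Fin n →₀ ℕ :=
    fun σ => single (k, l) 1 + ∑ i, single (i, σ i) 1
  have hM : Function.Injective M :=
    (add_right_injective _).comp (sum_single_graph_injective.comp DFunLike.coe_injective)
  have hsum : ∑ σ, (leibnizCoeff θ σ * s σ) • single (M σ) (1 : ℂ) = 0 := by
    have := congr($(congrArg ρ h) (single 0 1))
    rw [detθ_eq_sum, Finset.mul_sum, map_sum, LinearMap.sum_apply, map_zero,
      LinearMap.zero_apply] at this
    simp only [mul_smul_comm, map_smul, LinearMap.smul_apply, hword, smul_single, smul_eq_mul]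
      at this
    simpa only [smul_single, smul_eq_mul, mul_one] using this
  have hindep := (linearIndependent_single_one ℂ (Fin n × Fin n →₀ ℕ)).comp M hM
  exact mul_ne_zero (leibnizCoeff_ne_zero θ 1) (hs 1)
    (Fintype.linearIndependent_iff.mp hindep _ hsum 1)

end GLθ

/-- `det_θ` is central in the twisted coordinate algebra of `GL_θ(n)` if and only
if `∑_{k=1}^n θ^{ki} ≡ ∑_{k=1}^n θ^{kj} (mod 2π)` for all `i, j = 1, …, n`. -/
theorem detθ_central_iff {n : ℕ} (θ : Matrix (Fin n) (Fin n) ℂ)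
    (hθ : ∀ i j, θ j i = -θ i j) :
    (∀ a : GLθ θ, detθ θ * a = a * detθ θ) ↔
      (∀ i j : Fin n, ∃ m : ℤ,
        (∑ k, θ k i) = (∑ k, θ k j) + 2 * (Real.pi : ℂ) * (m : ℂ)) := by
  constructor
  · intro hcentral i j
    rw [← Complex.exp_I_mul_sub_eq_one_iff]
    refine smul_left_injective ℂ (GLθ.gg_mul_detθ_ne_zero hθ j i) ?_
    simp only [one_smul]
    rw [← GLθ.detθ_mul_gg hθ, hcentral]
  · intro hcond
    refine fun a => (RingQuot.commute_of_commute_mkAlgHom_ι (fun p => ?_) a).eq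
    change detθ θ * gg θ p.1 p.2 = gg θ p.1 p.2 * detθ θ
    rw [GLθ.detθ_mul_gg hθ, Complex.exp_I_mul_sub_eq_one_iff.mpr (hcond p.2 p.1), one_smul]
end
end

section
/- Let Λ^{IJ} denote the quantum minor of order d (rows I, columns J) and Λ^{I'J'} a quantum minor of order d' in the twisted coordinate algebra of GL_θ(n). Suppose each product g_{ij} g_{kl} satisfies g_{ij} g_{kl} = Q²_{ij;kl} g_{kl} g_{ij} with Q_{ij;kl} = q_{ki} q_{jl}. Then Λ^{IJ} Λ^{I'J'} = R²_{IJ;I'J'} Λ^{I'J'} Λ^{IJ}, where R_{IJ;I'J'} = ∏_{α=1}^d ∏_{α'=1}^{d'} Q_{i_α j_α; i'_{α'} j'_{α'}}. In particular the quantum minors of a fixed order d generate a subalgebra. -/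
noncomputable section

/-- The quantum minor `Λ^{IJ}` of order `d` on the rows `I` and columns `J` of the quantum
matrix `(g_{ij})`, given by the twisted Leibniz formula (the `(1/d!) ε_θ^{(r)} ε_θ^{(c)}`
formula written as a sum over permutations with the twisted weights). -/
def qminor {n d : ℕ} (θ : Matrix (Fin n) (Fin n) ℂ) {A : Type*} [Ring A] [Algebra ℂ A]
    (g : Fin n → Fin n → A) (I J : Fin d → Fin n) : A :=
  ∑ σ : Equiv.Perm (Fin d),
    (((Equiv.Perm.sign σ : ℤ) : ℂ) *
      ∏ p ∈ Finset.univ.filter (fun p : Fin d × Fin d => p.1 < p.2),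
        Qc θ (I p.2) (J (σ p.2)) (I p.1) (J (σ p.1))) •
      (List.ofFn fun a : Fin d => g (I a) (J (σ a))).prod

/-! Expanding both minors as sums over permutations, a monomial of `Λ^{IJ}` is moved past a
monomial of `Λ^{I'J'}` one entry at a time and picks up `∏ Q²` over all pairs of entries. Since
`Q_{ij;kl} = q_{ki} q_{jl}` splits into a row factor and a column factor, this product does not
depend on the permutations, so every pair of monomials commutes with the same factor `R²`. -/

section SkewCommute

variable {R A : Type*} [CommSemiring R] [Semiring A] [Algebra R A]

theorem mul_prod_ofFn_eq_smul {d : ℕ} (b : A) (v : Fin d → A) (t : Fin d → R)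
    (h : ∀ j, b * v j = t j • (v j * b)) :
    b * (List.ofFn v).prod = (∏ j, t j) • ((List.ofFn v).prod * b) := by
  induction d with
  | zero => simp
  | succ d ih =>
    rw [List.ofFn_succ, List.prod_cons, Fin.prod_univ_succ, ← mul_assoc, h 0, smul_mul_assoc,
      mul_assoc, ih (fun j => v j.succ) (fun j => t j.succ) (fun j => h j.succ), mul_smul_comm,
      smul_smul, ← mul_assoc]

theorem prod_ofFn_mul_prod_ofFn_eq_smul {d d' : ℕ} (u : Fin d → A) (v : Fin d' → A)
    (s : Fin d → Fin d' → R) (h : ∀ a b, u a * v b = s a b • (v b * u a)) :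
    (List.ofFn u).prod * (List.ofFn v).prod =
      (∏ a, ∏ b, s a b) • ((List.ofFn v).prod * (List.ofFn u).prod) := by
  induction d with
  | zero => simp
  | succ d ih =>
    rw [List.ofFn_succ (f := u), List.prod_cons, Fin.prod_univ_succ, mul_assoc,
      ih (fun a => u a.succ) (fun a b => s a.succ b) (fun a b => h a.succ b), mul_smul_comm,
      ← mul_assoc, mul_prod_ofFn_eq_smul (u 0) v (s 0) (h 0), smul_mul_assoc, smul_smul,
      mul_assoc, mul_comm]

end SkewCommute

theorem prod_prod_comp_perm {M : Type*} [CommMonoid M] {d d' : ℕ} (f : Fin d → Fin d' → M)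
    (σ : Equiv.Perm (Fin d)) (σ' : Equiv.Perm (Fin d')) :
    ∏ a, ∏ b, f (σ a) (σ' b) = ∏ a, ∏ b, f a b := by
  simpa only [← Fintype.prod_prod_type', Equiv.prodCongr_apply, Prod.map] using
    Equiv.prod_comp (σ.prodCongr σ') (fun p => f p.1 p.2)

theorem prod_prod_Qc_comp_perm {n d d' : ℕ} (θ : Matrix (Fin n) (Fin n) ℂ)
    (I J : Fin d → Fin n) (I' J' : Fin d' → Fin n)
    (σ : Equiv.Perm (Fin d)) (σ' : Equiv.Perm (Fin d')) :
    ∏ a, ∏ b, Qc θ (I a) (J (σ a)) (I' b) (J' (σ' b)) =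
      ∏ a, ∏ b, Qc θ (I a) (J a) (I' b) (J' b) := by
  simp only [Qc, Finset.prod_mul_distrib]
  rw [prod_prod_comp_perm (fun a b => qc θ (J a) (J' b))]

theorem prod_ofFn_entries_mul_prod_ofFn_entries {n d d' : ℕ} (θ : Matrix (Fin n) (Fin n) ℂ)
    {A : Type*} [Semiring A] [Algebra ℂ A] (g : Fin n → Fin n → A)
    (hrel : ∀ i j k l, g i j * g k l = (Qc θ i j k l) ^ 2 • (g k l * g i j))
    (I J : Fin d → Fin n) (I' J' : Fin d' → Fin n)
    (σ : Equiv.Perm (Fin d)) (σ' : Equiv.Perm (Fin d')) :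
    (List.ofFn fun a => g (I a) (J (σ a))).prod * (List.ofFn fun b => g (I' b) (J' (σ' b))).prod =
      (∏ α : Fin d, ∏ α' : Fin d', Qc θ (I α) (J α) (I' α') (J' α')) ^ 2 •
        ((List.ofFn fun b => g (I' b) (J' (σ' b))).prod *
          (List.ofFn fun a => g (I a) (J (σ a))).prod) := by
  rw [prod_ofFn_mul_prod_ofFn_eq_smul _ _ _ fun a b => hrel _ _ _ _]
  simp only [Finset.prod_pow, prod_prod_Qc_comp_perm]

theorem qminor_commutation_general {n d d' : ℕ} (θ : Matrix (Fin n) (Fin n) ℂ)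
    {A : Type*} [Ring A] [Algebra ℂ A]
    (g : Fin n → Fin n → A)
    (hrel : ∀ i j k l, g i j * g k l = (Qc θ i j k l) ^ 2 • (g k l * g i j))
    (I J : Fin d → Fin n) (I' J' : Fin d' → Fin n) :
    qminor θ g I J * qminor θ g I' J' =
      (∏ α : Fin d, ∏ α' : Fin d', Qc θ (I α) (J α) (I' α') (J' α')) ^ 2 •
        (qminor θ g I' J' * qminor θ g I J) := by
  simp only [qminor, Finset.sum_mul_sum, Finset.smul_sum]
  rw [Finset.sum_comm]
  refine Finset.sum_congr rfl fun σ' _ => Finset.sum_congr rfl fun σ _ => ?_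
  rw [smul_mul_smul_comm, smul_mul_smul_comm,
    prod_ofFn_entries_mul_prod_ofFn_entries θ g hrel, smul_comm, mul_comm]

/-- if the quantum matrix entries satisfy `g_{ij} g_{kl} = Q²_{ij;kl} g_{kl} g_{ij}`
with `Q_{ij;kl} = q_{ki} q_{jl}`, then quantum minors of orders `d` and `d'` satisfy
`Λ^{IJ} Λ^{I'J'} = R²_{IJ;I'J'} Λ^{I'J'} Λ^{IJ}` where
`R_{IJ;I'J'} = ∏_{α=1}^d ∏_{α'=1}^{d'} Q_{i_α j_α; i'_{α'} j'_{α'}}`.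
In particular the minors of a fixed order `d` pairwise `q`-commute and hence generate a
subalgebra. -/
theorem qminor_commutation {n d d' : ℕ} (θ : Matrix (Fin n) (Fin n) ℂ)
    (hθ : ∀ i j, θ j i = -θ i j) {A : Type*} [Ring A] [Algebra ℂ A]
    (g : Fin n → Fin n → A)
    (hrel : ∀ i j k l, g i j * g k l = (Qc θ i j k l) ^ 2 • (g k l * g i j))
    (I J : Fin d → Fin n) (I' J' : Fin d' → Fin n) :
    qminor θ g I J * qminor θ g I' J' =
      (∏ α : Fin d, ∏ α' : Fin d', Qc θ (I α) (J α) (I' α') (J' α')) ^ 2 •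
        (qminor θ g I' J' * qminor θ g I J) :=
  qminor_commutation_general θ g hrel I J I' J'
end
end

section
/- Let A^! be the ℂ-algebra generated by w̌₁,…,w̌_{n+1} with relations w̌_i² = 0 for all i, w̌_i w̌_{n+1} + w̌_{n+1} w̌_i = 0 for i ≤ n, and w̌_i w̌_j + q_{ij}² w̌_j w̌_i = 0 for i,j ≤ n (i ≠ j). Then A^! is a graded Frobenius algebra of index n+1: A^!_k = 0 for k > n+1, dim_ℂ A^!_k = C(n+1, k) for 0 ≤ k ≤ n+1 (in particular A^!_{n+1} ≅ ℂ), and the multiplication map A^!_k ⊗ A^!_{n+1−k} → A^!_{n+1} is a nondegenerate pairing for each k. -/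
noncomputable section

/-- Relations of the Koszul dual `A^!`: `w̌_i² = 0`, `w̌_i w̌_{n+1} + w̌_{n+1} w̌_i = 0` for
`i ≤ n`, and `w̌_i w̌_j + q_{ij}² w̌_j w̌_i = 0` for `i ≠ j ≤ n`. -/
inductive KoszulRel {n : ℕ} (θ : Matrix (Fin n) (Fin n) ℂ) :
    FreeAlgebra ℂ (Fin (n + 1)) → FreeAlgebra ℂ (Fin (n + 1)) → Prop
  | sq (i : Fin (n + 1)) :
      KoszulRel θ (FreeAlgebra.ι ℂ i * FreeAlgebra.ι ℂ i) 0
  | antiLast (i : Fin n) :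
      KoszulRel θ (FreeAlgebra.ι ℂ i.castSucc * FreeAlgebra.ι ℂ (Fin.last n) +
        FreeAlgebra.ι ℂ (Fin.last n) * FreeAlgebra.ι ℂ i.castSucc) 0
  | anti (i j : Fin n) (h : i ≠ j) :
      KoszulRel θ (FreeAlgebra.ι ℂ i.castSucc * FreeAlgebra.ι ℂ j.castSucc +
        (qc θ i j) ^ 2 • (FreeAlgebra.ι ℂ j.castSucc * FreeAlgebra.ι ℂ i.castSucc)) 0

/-- The Koszul dual algebra `A^!`, a deformed exterior algebra on `n+1` generators. -/
abbrev KoszulDual {n : ℕ} (θ : Matrix (Fin n) (Fin n) ℂ) := RingQuot (KoszulRel θ)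

/-- The generator `w̌_i` of `A^!`. -/
def V {n : ℕ} (θ : Matrix (Fin n) (Fin n) ℂ) (i : Fin (n + 1)) : KoszulDual θ :=
  RingQuot.mkAlgHom ℂ (KoszulRel θ) (FreeAlgebra.ι ℂ i)

/-- The degree-`k` component `A^!_k` of `A^!`: the span of products of `k` generators. -/
def KD {n : ℕ} (θ : Matrix (Fin n) (Fin n) ℂ) (k : ℕ) : Submodule ℂ (KoszulDual θ) :=
  Submodule.span ℂ
    {x : KoszulDual θ | ∃ f : Fin k → Fin (n + 1), x = (List.ofFn fun t => V θ (f t)).prod}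

/-!
In `A^!` the generators twisted-anticommute, `w̌_i w̌_j = c_{ij} w̌_j w̌_i` with `c_{ij} = -q_{ij}²`
(and `c_{ij} = -1` when one index is `n+1`), and square to zero. Hence a word with a repeated
letter vanishes and any other word is a multiple of the ordered monomial `w̌_S` of its set of
letters `S`; in particular `w̌_S w̌_T = 0` whenever `S ∩ T ≠ ∅`.

Skew-symmetry of `θ` gives `c_{ij} c_{ji} = 1`, which is exactly what makes the twisted wedge
products `e_S ↦ (∏_{j ∈ S, j < i} c_{ij}) e_{S ∪ {i}}` on the space with basis `(e_S)_S` a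
representation of `A^!`. There `w̌_S e_∅` is a nonzero multiple of `e_S`, so the `w̌_S` are linearly
independent and `w̌_S w̌_{Sᶜ} ≠ 0`, which gives the dimensions and the perfect pairing.
-/

section TwistedExterior

variable {R A ι : Type*} [CommSemiring R] [Semiring A] [Algebra R A] [LinearOrder ι]

def insertCoeff (c : ι → ι → R) (i : ι) (S : Finset ι) : R :=
  ∏ j ∈ S with j < i, c i j

def sortedProd (v : ι → A) (S : Finset ι) : A :=
  ((S.sort (· ≤ ·)).map v).prod

lemma insertCoeff_insert (c : ι → ι → R) (i : ι) {a : ι} {S : Finset ι} (ha : a ∉ S) :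
    insertCoeff c i (insert a S) = (if a < i then c i a else 1) * insertCoeff c i S := by
  rw [insertCoeff, Finset.filter_insert]
  split_ifs
  · exact Finset.prod_insert (by simp [ha])
  · rw [one_mul, insertCoeff]

lemma insertCoeff_eq_one (c : ι → ι → R) {i : ι} {S : Finset ι} (h : ∀ j ∈ S, i ≤ j) :
    insertCoeff c i S = 1 := by
  rw [insertCoeff, Finset.filter_false_of_mem fun j hj => not_lt.2 (h j hj), Finset.prod_empty]

lemma sortedProd_empty (v : ι → A) : sortedProd v ∅ = 1 := by
  simp [sortedProd]

lemma sortedProd_insert_of_lt (v : ι → A) {a : ι} {S : Finset ι} (h : ∀ j ∈ S, a < j) :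
    sortedProd v (insert a S) = v a * sortedProd v S := by
  rw [sortedProd, Finset.sort_insert _ (fun j hj => (h j hj).le) fun ha => lt_irrefl a (h a ha),
    List.map_cons, List.prod_cons, sortedProd]

variable {v : ι → A} {c : ι → ι → R}

theorem mul_sortedProd (hsq : ∀ i, v i * v i = 0)
    (hcomm : ∀ i j, j < i → v i * v j = c i j • (v j * v i)) (i : ι) (S : Finset ι) :
    v i * sortedProd v S =
      if i ∈ S then 0 else insertCoeff c i S • sortedProd v (insert i S) := by
  induction S using Finset.induction_on_min generalizing i with
  | empty =>
    rw [if_neg (Finset.notMem_empty i), insertCoeff_eq_one c (by simp), one_smul,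
      sortedProd_insert_of_lt v (by simp)]
  | insert a S ha ih =>
    have haS : a ∉ S := fun h => lt_irrefl a (ha a h)
    rw [sortedProd_insert_of_lt v ha]
    rcases lt_trichotomy i a with hia | rfl | hai
    · have hi : ∀ j ∈ insert a S, i < j := by
        simpa [hia] using fun j hj => hia.trans (ha j hj)
      rw [if_neg fun h => lt_irrefl i (hi i h), insertCoeff_eq_one c fun j hj => (hi j hj).le,
        one_smul, sortedProd_insert_of_lt v hi, sortedProd_insert_of_lt v ha]
    · rw [if_pos (Finset.mem_insert_self i S), ← mul_assoc, hsq, zero_mul]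
    · rw [← mul_assoc, hcomm i a hai, smul_mul_assoc, mul_assoc, ih,
        insertCoeff_insert c i haS, if_pos hai]
      by_cases hiS : i ∈ S
      · rw [if_pos hiS, if_pos (Finset.mem_insert_of_mem hiS), mul_zero, smul_zero]
      · have ha' : ∀ j ∈ insert i S, a < j := by simpa [hai] using ha
        rw [if_neg hiS, if_neg (by simp [hai.ne', hiS]), mul_smul_comm, smul_smul,
          Finset.insert_comm, sortedProd_insert_of_lt v ha']

theorem exists_prod_map_eq_smul_sortedProd (hsq : ∀ i, v i * v i = 0)
    (hcomm : ∀ i j, j < i → v i * v j = c i j • (v j * v i)) (l : List ι) :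
    ∃ d : R, (l.map v).prod = d • sortedProd v l.toFinset := by
  induction l with
  | nil => exact ⟨1, by rw [List.toFinset_nil, sortedProd_empty, one_smul, List.map_nil,
      List.prod_nil]⟩
  | cons a l ih =>
    obtain ⟨d, hd⟩ := ih
    rw [List.map_cons, List.prod_cons, hd, mul_smul_comm, mul_sortedProd hsq hcomm,
      List.toFinset_cons]
    split_ifs
    · exact ⟨0, by rw [smul_zero, zero_smul]⟩
    · exact ⟨d * insertCoeff c a l.toFinset, smul_smul _ _ _⟩

theorem prod_map_eq_zero_of_not_nodup (hsq : ∀ i, v i * v i = 0)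
    (hcomm : ∀ i j, j < i → v i * v j = c i j • (v j * v i)) {l : List ι} (hl : ¬ l.Nodup) :
    (l.map v).prod = 0 := by
  induction l with
  | nil => exact absurd List.nodup_nil hl
  | cons a l ih =>
    rw [List.map_cons, List.prod_cons]
    by_cases ha : a ∈ l
    · obtain ⟨d, hd⟩ := exists_prod_map_eq_smul_sortedProd hsq hcomm l
      rw [hd, mul_smul_comm, mul_sortedProd hsq hcomm, if_pos (List.mem_toFinset.2 ha),
        smul_zero]
    · rw [ih fun h => hl (List.nodup_cons.2 ⟨ha, h⟩), mul_zero]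

lemma sortedProd_mul_sortedProd_eq_prod_append (S T : Finset ι) :
    sortedProd v S * sortedProd v T = ((S.sort (· ≤ ·) ++ T.sort (· ≤ ·)).map v).prod := by
  rw [List.map_append, List.prod_append, sortedProd, sortedProd]

theorem sortedProd_mul_sortedProd_eq_zero (hsq : ∀ i, v i * v i = 0)
    (hcomm : ∀ i j, j < i → v i * v j = c i j • (v j * v i)) {S T : Finset ι}
    (h : ¬ Disjoint S T) : sortedProd v S * sortedProd v T = 0 := by
  rw [sortedProd_mul_sortedProd_eq_prod_append]
  refine prod_map_eq_zero_of_not_nodup hsq hcomm fun hnd => h ?_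
  exact Finset.disjoint_left.2 fun a haS haT =>
    List.disjoint_of_nodup_append hnd ((Finset.mem_sort _).2 haS) ((Finset.mem_sort _).2 haT)

lemma Finset.eq_of_disjoint_compl_of_card_eq [Fintype ι] {S T : Finset ι} (h : Disjoint T Sᶜ)
    (hcard : T.card = S.card) : T = S :=
  Finset.eq_of_subset_of_card_le (disjoint_compl_right_iff.1 h) hcard.ge

section Pairing

variable [Fintype ι] {k : ℕ} (a : {S : Finset ι // S.card = k} → R)
  (S : {S : Finset ι // S.card = k})

theorem sum_smul_sortedProd_mul_sortedProd_compl (hsq : ∀ i, v i * v i = 0)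
    (hcomm : ∀ i j, j < i → v i * v j = c i j • (v j * v i)) :
    (∑ T, a T • sortedProd v T.1) * sortedProd v S.1ᶜ =
      a S • (sortedProd v S.1 * sortedProd v S.1ᶜ) := by
  rw [Finset.sum_mul, Finset.sum_eq_single S _ (by simp), smul_mul_assoc]
  intro T _ hTS
  rw [smul_mul_assoc, sortedProd_mul_sortedProd_eq_zero hsq hcomm, smul_zero]
  exact fun h => hTS (Subtype.ext (Finset.eq_of_disjoint_compl_of_card_eq h (T.2.trans S.2.symm)))

theorem sortedProd_compl_mul_sum_smul_sortedProd (hsq : ∀ i, v i * v i = 0)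
    (hcomm : ∀ i j, j < i → v i * v j = c i j • (v j * v i)) :
    sortedProd v S.1ᶜ * (∑ T, a T • sortedProd v T.1) =
      a S • (sortedProd v S.1ᶜ * sortedProd v S.1) := by
  rw [Finset.mul_sum, Finset.sum_eq_single S _ (by simp), mul_smul_comm]
  intro T _ hTS
  rw [mul_smul_comm, sortedProd_mul_sortedProd_eq_zero hsq hcomm, smul_zero]
  exact fun h =>
    hTS (Subtype.ext (Finset.eq_of_disjoint_compl_of_card_eq h.symm (T.2.trans S.2.symm)))

end Pairing

end TwistedExterior

section TwistedWedge

variable {R ι : Type*} [CommSemiring R] [LinearOrder ι] (c : ι → ι → R)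

def insertOp (i : ι) : Module.End R (Finset ι →₀ R) :=
  Finsupp.lift (Finset ι →₀ R) R (Finset ι)
    fun S => if i ∈ S then 0 else insertCoeff c i S • Finsupp.single (insert i S) 1

lemma insertOp_single (i : ι) (S : Finset ι) (b : R) :
    insertOp c i (Finsupp.single S b) =
      if i ∈ S then 0 else (b * insertCoeff c i S) • Finsupp.single (insert i S) 1 := by
  rw [insertOp, Finsupp.lift_apply, Finsupp.sum_single_index (by simp)]
  split_ifs <;> simp

lemma insertOp_mul_self (i : ι) : insertOp c i * insertOp c i = 0 := by
  refine Finsupp.lhom_ext fun S b => ?_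
  rw [Module.End.mul_apply, insertOp_single, LinearMap.zero_apply]
  split_ifs
  · rw [map_zero]
  · rw [map_smul, insertOp_single, if_pos (Finset.mem_insert_self i S), smul_zero]

lemma insertCoeff_mul_insertCoeff_insert {i j : ι} {S : Finset ι} (hij : i ≠ j)
    (hc : c i j * c j i = 1) (hi : i ∉ S) (hj : j ∉ S) :
    insertCoeff c j S * insertCoeff c i (insert j S) =
      c i j * (insertCoeff c i S * insertCoeff c j (insert i S)) := by
  rw [insertCoeff_insert c i hj, insertCoeff_insert c j hi]
  rcases hij.lt_or_gt with h | h
  · rw [if_neg h.asymm, if_pos h]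
    trans (c i j * c j i) * (insertCoeff c j S * insertCoeff c i S)
    · rw [hc]; ring
    · ring
  · rw [if_pos h, if_neg h.asymm]
    ring

lemma insertOp_mul_insertOp {i j : ι} (hij : i ≠ j) (hc : c i j * c j i = 1) :
    insertOp c i * insertOp c j = c i j • (insertOp c j * insertOp c i) := by
  refine Finsupp.lhom_ext fun S b => ?_
  rw [LinearMap.smul_apply, Module.End.mul_apply, Module.End.mul_apply, insertOp_single,
    insertOp_single]
  by_cases hi : i ∈ S <;> by_cases hj : j ∈ S
  · rw [if_pos hi, if_pos hj, map_zero, map_zero, smul_zero]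
  · rw [if_pos hi, if_neg hj, map_zero, smul_zero, map_smul, insertOp_single,
      if_pos (Finset.mem_insert_of_mem hi), smul_zero]
  · rw [if_neg hi, if_pos hj, map_zero, map_smul, insertOp_single,
      if_pos (Finset.mem_insert_of_mem hj), smul_zero, smul_zero]
  · rw [if_neg hi, if_neg hj, map_smul, map_smul, insertOp_single, insertOp_single,
      if_neg (by simp [hij, hi]), if_neg (by simp [hij.symm, hj]), Finset.insert_comm,
      smul_smul, smul_smul, smul_smul, one_mul, one_mul]
    congr 1
    rw [mul_assoc, insertCoeff_mul_insertCoeff_insert c hij hc hi hj]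
    ring

theorem prod_map_insertOp_apply_single_empty (hc : ∀ i j, IsUnit (c i j)) {l : List ι}
    (hl : l.Nodup) :
    ∃ d : R, IsUnit d ∧
      (l.map (insertOp c)).prod (Finsupp.single ∅ 1) = d • Finsupp.single l.toFinset 1 := by
  induction l with
  | nil => exact ⟨1, isUnit_one, by simp⟩
  | cons a l ih =>
    obtain ⟨ha, hl⟩ := List.nodup_cons.1 hl
    obtain ⟨d, hd, h⟩ := ih hl
    refine ⟨d * insertCoeff c a l.toFinset, hd.mul (IsUnit.prod_iff.2 fun j _ => hc a j), ?_⟩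
    rw [List.map_cons, List.prod_cons, Module.End.mul_apply, h, Finsupp.smul_single_one,
      insertOp_single, if_neg (by simpa using ha), List.toFinset_cons]

end TwistedWedge

section KoszulDual

variable {n : ℕ} (θ : Matrix (Fin n) (Fin n) ℂ)

def koszulCoeff (i j : Fin (n + 1)) : ℂ :=
  Fin.lastCases (-1) (fun i' => Fin.lastCases (-1) (fun j' => -qc θ i' j' ^ 2) j) i

variable {θ}

lemma qc_sq_mul_qc_sq (hθ : ∀ i j, θ j i = -θ i j) (i j : Fin n) :
    qc θ i j ^ 2 * qc θ j i ^ 2 = 1 := by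
  rw [qc, qc, ← Complex.exp_nat_mul, ← Complex.exp_nat_mul, ← Complex.exp_add, hθ i j]
  ring_nf
  exact Complex.exp_zero

lemma koszulCoeff_mul_swap (hθ : ∀ i j, θ j i = -θ i j) (i j : Fin (n + 1)) :
    koszulCoeff θ i j * koszulCoeff θ j i = 1 := by
  induction i using Fin.lastCases <;> induction j using Fin.lastCases <;>
    simp [koszulCoeff, qc_sq_mul_qc_sq hθ]

variable (θ)

lemma mkAlgHom_ι_eq_V (i : Fin (n + 1)) :
    RingQuot.mkAlgHom ℂ (KoszulRel θ) (FreeAlgebra.ι ℂ i) = V θ i := rfl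

lemma V_mul_self (i : Fin (n + 1)) : V θ i * V θ i = 0 := by
  simpa [mkAlgHom_ι_eq_V] using RingQuot.mkAlgHom_rel ℂ (KoszulRel.sq (θ := θ) i)

lemma V_mul_V {i j : Fin (n + 1)} (hij : i ≠ j) :
    V θ i * V θ j = koszulCoeff θ i j • (V θ j * V θ i) := by
  induction i using Fin.lastCases <;> induction j using Fin.lastCases
  · exact absurd rfl hij
  case last.cast j =>
    have h := RingQuot.mkAlgHom_rel ℂ (KoszulRel.antiLast (θ := θ) j)
    simp only [map_add, map_mul, map_zero, mkAlgHom_ι_eq_V] at h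
    rw [eq_neg_of_add_eq_zero_right h, koszulCoeff, Fin.lastCases_last]
    exact (neg_one_smul ℂ _).symm
  case cast.last i =>
    have h := RingQuot.mkAlgHom_rel ℂ (KoszulRel.antiLast (θ := θ) i)
    simp only [map_add, map_mul, map_zero, mkAlgHom_ι_eq_V] at h
    rw [eq_neg_of_add_eq_zero_left h, koszulCoeff, Fin.lastCases_castSucc, Fin.lastCases_last]
    exact (neg_one_smul ℂ _).symm
  case cast.cast i j =>
    have h := RingQuot.mkAlgHom_rel ℂ
      (KoszulRel.anti (θ := θ) i j fun h => hij (congrArg Fin.castSucc h))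
    simp only [map_add, map_smul, map_mul, map_zero, mkAlgHom_ι_eq_V] at h
    rw [eq_neg_of_add_eq_zero_left h, koszulCoeff, Fin.lastCases_castSucc, Fin.lastCases_castSucc]
    exact (neg_smul (qc θ i j ^ 2) _).symm

lemma lift_eq_of_koszulRel {B : Type*} [Ring B] [Algebra ℂ B] (u : Fin (n + 1) → B)
    (hsq : ∀ i, u i * u i = 0) (hcomm : ∀ i j, i ≠ j → u i * u j = koszulCoeff θ i j • (u j * u i))
    {x y : FreeAlgebra ℂ (Fin (n + 1))} (h : KoszulRel θ x y) :
    FreeAlgebra.lift ℂ u x = FreeAlgebra.lift ℂ u y := by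
  cases h with
  | sq i => simp [hsq]
  | antiLast i => simp [hcomm _ _ (Fin.castSucc_lt_last i).ne, koszulCoeff]
  | anti i j hij => simp [hcomm _ _ ((Fin.castSucc_injective n).ne hij), koszulCoeff]

variable {θ}

def koszulRep (hθ : ∀ i j, θ j i = -θ i j) :
    KoszulDual θ →ₐ[ℂ] Module.End ℂ (Finset (Fin (n + 1)) →₀ ℂ) :=
  RingQuot.liftAlgHom ℂ ⟨FreeAlgebra.lift ℂ (insertOp (koszulCoeff θ)), fun _ _ =>
    lift_eq_of_koszulRel θ _ (insertOp_mul_self _)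
      fun i j hij => insertOp_mul_insertOp _ hij (koszulCoeff_mul_swap hθ i j)⟩

lemma koszulRep_V (hθ : ∀ i j, θ j i = -θ i j) (i : Fin (n + 1)) :
    koszulRep hθ (V θ i) = insertOp (koszulCoeff θ) i := by
  rw [koszulRep, V, RingQuot.liftAlgHom_mkAlgHom_apply, FreeAlgebra.lift_ι_apply]

theorem koszulRep_prod_apply_single_empty (hθ : ∀ i j, θ j i = -θ i j)
    {l : List (Fin (n + 1))} (hl : l.Nodup) :
    ∃ d : ℂ, d ≠ 0 ∧
      koszulRep hθ (l.map (V θ)).prod (Finsupp.single ∅ 1) = d • Finsupp.single l.toFinset 1 := by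
  obtain ⟨d, hd, h⟩ := prod_map_insertOp_apply_single_empty (koszulCoeff θ)
    (fun i j => IsUnit.of_mul_eq_one _ (koszulCoeff_mul_swap hθ i j)) hl
  refine ⟨d, hd.ne_zero, ?_⟩
  rw [map_list_prod, List.map_map, ← h]
  congr 3
  exact funext (koszulRep_V hθ)

theorem linearIndependent_sortedProd_V (hθ : ∀ i j, θ j i = -θ i j) :
    LinearIndependent ℂ (sortedProd (V θ)) := by
  choose d hd h using fun S : Finset (Fin (n + 1)) =>
    koszulRep_prod_apply_single_empty hθ (S.sort_nodup (· ≤ ·))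
  refine LinearIndependent.of_comp
    (LinearMap.applyₗ (Finsupp.single ∅ 1) ∘ₗ (koszulRep hθ).toLinearMap) ?_
  convert (Finsupp.linearIndependent_single_one ℂ (Finset (Fin (n + 1)))).units_smul
    fun S => Units.mk0 (d S) (hd S) using 1
  funext S
  simpa [sortedProd] using h S

theorem sortedProd_mul_sortedProd_ne_zero (hθ : ∀ i j, θ j i = -θ i j)
    {S T : Finset (Fin (n + 1))} (h : Disjoint S T) :
    sortedProd (V θ) S * sortedProd (V θ) T ≠ 0 := by
  have hnd : (S.sort (· ≤ ·) ++ T.sort (· ≤ ·)).Nodup :=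
    (S.sort_nodup _).append (T.sort_nodup _) fun a haS haT =>
      Finset.disjoint_left.1 h ((Finset.mem_sort _).1 haS) ((Finset.mem_sort _).1 haT)
  obtain ⟨d, hd, hrep⟩ := koszulRep_prod_apply_single_empty hθ hnd
  rw [sortedProd_mul_sortedProd_eq_prod_append]
  intro h0
  rw [h0, map_zero, LinearMap.zero_apply, eq_comm, smul_eq_zero] at hrep
  simp [hd] at hrep

end KoszulDual

section Grading

variable {n : ℕ} {θ : Matrix (Fin n) (Fin n) ℂ}

lemma ofFn_V_prod {k : ℕ} (f : Fin k → Fin (n + 1)) :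
    (List.ofFn fun t => V θ (f t)).prod = ((List.ofFn f).map (V θ)).prod := by
  rw [List.map_ofFn]
  rfl

lemma prod_map_V_mem_KD (l : List (Fin (n + 1))) : (l.map (V θ)).prod ∈ KD θ l.length := by
  refine Submodule.subset_span ⟨l.get, ?_⟩
  conv_lhs => rw [← List.ofFn_get l, List.map_ofFn]
  rfl

lemma sortedProd_mem_KD (S : Finset (Fin (n + 1))) : sortedProd (V θ) S ∈ KD θ S.card := by
  have h := prod_map_V_mem_KD (θ := θ) (S.sort (· ≤ ·))
  rwa [Finset.length_sort] at h

theorem KD_eq_span_sortedProd (k : ℕ) :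
    KD θ k = Submodule.span ℂ
      (Set.range fun S : {S : Finset (Fin (n + 1)) // S.card = k} => sortedProd (V θ) S.1) := by
  refine le_antisymm (Submodule.span_le.2 ?_) (Submodule.span_le.2 ?_)
  · rintro _ ⟨f, rfl⟩
    rw [SetLike.mem_coe, ofFn_V_prod]
    by_cases hnd : (List.ofFn f).Nodup
    · obtain ⟨d, hd⟩ := exists_prod_map_eq_smul_sortedProd (V_mul_self θ)
        (fun i j h => V_mul_V θ h.ne') (List.ofFn f)
      rw [hd]
      refine Submodule.smul_mem _ d (Submodule.subset_span ⟨⟨(List.ofFn f).toFinset, ?_⟩, rfl⟩)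
      rw [List.toFinset_card_of_nodup hnd, List.length_ofFn]
    · rw [prod_map_eq_zero_of_not_nodup (V_mul_self θ) (fun i j h => V_mul_V θ h.ne') hnd]
      exact Submodule.zero_mem _
  · rintro _ ⟨⟨S, rfl⟩, rfl⟩
    exact sortedProd_mem_KD S

theorem KD_eq_bot {k : ℕ} (hk : n + 1 < k) : KD θ k = ⊥ := by
  refine Submodule.span_eq_bot.2 ?_
  rintro _ ⟨f, rfl⟩
  rw [ofFn_V_prod]
  refine prod_map_eq_zero_of_not_nodup (V_mul_self θ) (fun i j h => V_mul_V θ h.ne') fun h => ?_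
  have := h.length_le_card
  rw [List.length_ofFn, Fintype.card_fin] at this
  omega

theorem finrank_KD (hθ : ∀ i j, θ j i = -θ i j) (k : ℕ) :
    Module.finrank ℂ (KD θ k) = (n + 1).choose k := by
  rw [KD_eq_span_sortedProd]
  refine (finrank_span_eq_card
    ((linearIndependent_sortedProd_V hθ).comp _ Subtype.val_injective)).trans ?_
  rw [Fintype.card_finset_len, Fintype.card_fin]

theorem eq_zero_of_forall_mul_KD_eq_zero (hθ : ∀ i j, θ j i = -θ i j) {k m : ℕ}
    (hkm : k + m = n + 1) {x : KoszulDual θ} (hx : x ∈ KD θ k)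
    (h : ∀ y ∈ KD θ m, x * y = 0) : x = 0 := by
  obtain ⟨a, rfl⟩ := (Submodule.mem_span_range_iff_exists_fun ℂ).1 (KD_eq_span_sortedProd k ▸ hx)
  suffices ∀ S, a S = 0 by simp [this]
  intro S
  have hS : S.1ᶜ.card = m := by rw [Finset.card_compl, S.2, Fintype.card_fin]; omega
  have h0 := h _ (hS ▸ sortedProd_mem_KD S.1ᶜ)
  rw [sum_smul_sortedProd_mul_sortedProd_compl a S (V_mul_self θ)
    (fun i j h => V_mul_V θ h.ne')] at h0
  exact (smul_eq_zero.1 h0).resolve_right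
    (sortedProd_mul_sortedProd_ne_zero hθ disjoint_compl_right)

theorem eq_zero_of_forall_KD_mul_eq_zero (hθ : ∀ i j, θ j i = -θ i j) {k m : ℕ}
    (hkm : k + m = n + 1) {y : KoszulDual θ} (hy : y ∈ KD θ m)
    (h : ∀ x ∈ KD θ k, x * y = 0) : y = 0 := by
  obtain ⟨a, rfl⟩ := (Submodule.mem_span_range_iff_exists_fun ℂ).1 (KD_eq_span_sortedProd m ▸ hy)
  suffices ∀ S, a S = 0 by simp [this]
  intro S
  have hS : S.1ᶜ.card = k := by rw [Finset.card_compl, S.2, Fintype.card_fin]; omega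
  have h0 := h _ (hS ▸ sortedProd_mem_KD S.1ᶜ)
  rw [sortedProd_compl_mul_sum_smul_sortedProd a S (V_mul_self θ)
    (fun i j h => V_mul_V θ h.ne')] at h0
  exact (smul_eq_zero.1 h0).resolve_right
    (sortedProd_mul_sortedProd_ne_zero hθ disjoint_compl_left)

end Grading

/-- `A^!` is a graded Frobenius algebra of index `n+1`: `A^!_k = 0` for
`k > n+1`, `dim_ℂ A^!_k = C(n+1, k)` for `0 ≤ k ≤ n+1` (in particular `A^!_{n+1} ≅ ℂ`), and
the multiplication `A^!_k ⊗ A^!_{n+1−k} → A^!_{n+1}` is a nondegenerate pairing. -/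
theorem koszulDual_frobenius {n : ℕ} (θ : Matrix (Fin n) (Fin n) ℂ)
    (hθ : ∀ i j, θ j i = -θ i j) :
    (∀ k : ℕ, n + 1 < k → KD θ k = ⊥) ∧
    (∀ k : ℕ, k ≤ n + 1 → Module.finrank ℂ (KD θ k) = (n + 1).choose k) ∧
    (∀ k : ℕ, k ≤ n + 1 →
      (∀ x ∈ KD θ k, (∀ y ∈ KD θ (n + 1 - k), x * y = 0) → x = 0) ∧
      (∀ y ∈ KD θ (n + 1 - k), (∀ x ∈ KD θ k, x * y = 0) → y = 0)) := by
  refine ⟨fun k hk => KD_eq_bot hk, fun k _ => finrank_KD hθ k, fun k hk =>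
    ⟨fun x hx => eq_zero_of_forall_mul_KD_eq_zero hθ (by omega) hx,
      fun y hy => eq_zero_of_forall_KD_mul_eq_zero hθ (by omega) hy⟩⟩
end
end

section
/- Let H = Fun(GL(n)) as above and let π: H → L be the Hopf algebra surjection onto Fun(GL(d)×GL(n−d)) defined by π(g_{ij}) = l_{ij} if (i,j) lies in the diagonal blocks (1 ≤ i,j ≤ d or d+1 ≤ i,j ≤ n) and π(g_{ij}) = 0 otherwise. Define the left coaction Φ = (π ⊗ id)∘Δ : H → L ⊗ H. Then the elements η_{ij} = ∑_{k=1}^d S(g_{ik}) g_{kj} and η^⊥_{ij} = ∑_{k=d+1}^n S(g_{ik}) g_{kj} are left coinvariant: Φ(η_{ij}) = 1 ⊗ η_{ij} and Φ(η^⊥_{ij}) = 1 ⊗ η^⊥_{ij}. -/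
open scoped TensorProduct

/-!
Applying `Δ` to `∑_{k ∈ s} S(g_{ik}) g_{kj}` and then `π ⊗ id` gives
`∑_{p,m} (∑_{k ∈ s} π(S(g_{pk})) π(g_{km})) ⊗ S(g_{ip}) g_{mj}`.
When `s` is one of the diagonal blocks, `π` kills every factor whose other index leaves `s`, so the
inner sum is the `(p, m)` entry of `S(l) l` for that block of `L`, i.e. `δ_{pm}` on `s` and `0`
elsewhere; the double sum then collapses to `1 ⊗ ∑_{p ∈ s} S(g_{ip}) g_{pj}`.
-/

theorem sum_mul_eq_ite_of_blockDiagonal {L ι : Type*} [CommRing L] [Fintype ι] [DecidableEq ι]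
    (P : ι → Prop) [DecidablePred P] (A B lS l : ι → ι → L)
    (hA : ∀ p k, P k → A p k = if P p then lS p k else 0)
    (hB : ∀ k m, P k → B k m = if P m then l k m else 0)
    (hL : ∀ p m, P p → P m →
      ∑ k ∈ Finset.univ.filter P, lS p k * l k m = if p = m then 1 else 0)
    (p m : ι) :
    ∑ k ∈ Finset.univ.filter P, A p k * B k m = if p = m ∧ P p then 1 else 0 := by
  have hblock : ∀ k ∈ Finset.univ.filter P,
      A p k * B k m = if P p ∧ P m then lS p k * l k m else 0 := by
    intro k hk
    have hPk := (Finset.mem_filter.mp hk).2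
    rw [hA p k hPk, hB k m hPk]
    split_ifs <;> simp_all
  rw [Finset.sum_congr rfl hblock]
  by_cases hp : P p
  · by_cases hm : P m
    · simp only [hp, hm, and_self, and_true, if_true, hL p m hp hm]
    · simp only [hm, and_false, if_false, Finset.sum_const_zero]
      grind
  · simp [hp]

section BlockCoaction

variable {R H L ι : Type*} [CommRing R] [CommRing H] [Algebra R H] [CommRing L] [Algebra R L]
  [Fintype ι]

theorem map_comp_comul_sum_antipode_mul (Δ : H →ₐ[R] H ⊗[R] H) (π : H →ₐ[R] L)
    (g gS : ι → ι → H) (hΔg : ∀ i j, Δ (g i j) = ∑ k, g i k ⊗ₜ[R] g k j)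
    (hΔgS : ∀ i j, Δ (gS i j) = ∑ p, gS p j ⊗ₜ[R] gS i p) (s : Finset ι) (i j : ι) :
    ((Algebra.TensorProduct.map π (AlgHom.id R H)).comp Δ) (∑ k ∈ s, gS i k * g k j) =
      ∑ p, ∑ m, (∑ k ∈ s, π (gS p k) * π (g k m)) ⊗ₜ[R] (gS i p * g m j) := by
  simp only [AlgHom.comp_apply, map_sum, map_mul, hΔg, hΔgS, Finset.sum_mul_sum,
    Algebra.TensorProduct.tmul_mul_tmul, Algebra.TensorProduct.map_tmul, AlgHom.id_apply,
    TensorProduct.sum_tmul]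
  rw [Finset.sum_comm]
  exact Finset.sum_congr rfl fun p _ => Finset.sum_comm

theorem sum_sum_ite_tmul [DecidableEq ι] (P : ι → Prop) [DecidablePred P] (x : ι → ι → H) :
    ∑ p, ∑ m, (if p = m ∧ P p then (1 : L) else 0) ⊗ₜ[R] x p m =
      1 ⊗ₜ[R] ∑ p ∈ Finset.univ.filter P, x p p := by
  simp only [ite_and, TensorProduct.ite_tmul, TensorProduct.tmul_ite, Finset.sum_ite_eq,
    Finset.mem_univ, if_true, Finset.sum_filter, TensorProduct.tmul_sum]

theorem map_comp_comul_sum_antipode_mul_of_blockDiagonal [DecidableEq ι]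
    (Δ : H →ₐ[R] H ⊗[R] H) (π : H →ₐ[R] L) (g gS : ι → ι → H) (l lS : ι → ι → L)
    (hΔg : ∀ i j, Δ (g i j) = ∑ k, g i k ⊗ₜ[R] g k j)
    (hΔgS : ∀ i j, Δ (gS i j) = ∑ p, gS p j ⊗ₜ[R] gS i p)
    (P : ι → Prop) [DecidablePred P]
    (hπg : ∀ k m, P k → π (g k m) = if P m then l k m else 0)
    (hπgS : ∀ p k, P k → π (gS p k) = if P p then lS p k else 0)
    (hL : ∀ p m, P p → P m →
      ∑ k ∈ Finset.univ.filter P, lS p k * l k m = if p = m then 1 else 0)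
    (i j : ι) :
    ((Algebra.TensorProduct.map π (AlgHom.id R H)).comp Δ)
        (∑ k ∈ Finset.univ.filter P, gS i k * g k j) =
      1 ⊗ₜ[R] ∑ k ∈ Finset.univ.filter P, gS i k * g k j := by
  rw [map_comp_comul_sum_antipode_mul Δ π g gS hΔg hΔgS]
  simp only [sum_mul_eq_ite_of_blockDiagonal P _ _ lS l hπgS hπg hL]
  exact sum_sum_ite_tmul P _

end BlockCoaction

theorem eta_coinvariant_general {H L : Type*} [CommRing H] [Algebra ℂ H] [CommRing L] [Algebra ℂ L]
    {n : ℕ} (d : ℕ)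
    (g gS : Fin n → Fin n → H) (l lS : Fin n → Fin n → L)
    (Δ : H →ₐ[ℂ] H ⊗[ℂ] H)
    (hΔg : ∀ i j, Δ (g i j) = ∑ k, g i k ⊗ₜ[ℂ] g k j)
    (hΔgS : ∀ i j, Δ (gS i j) = ∑ p, gS p j ⊗ₜ[ℂ] gS i p)
    (π : H →ₐ[ℂ] L)
    (hπg : ∀ i j, π (g i j) =
      if ((i : ℕ) < d ∧ (j : ℕ) < d) ∨ (d ≤ (i : ℕ) ∧ d ≤ (j : ℕ)) then l i j else 0)
    (hπgS : ∀ i j, π (gS i j) =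
      if ((i : ℕ) < d ∧ (j : ℕ) < d) ∨ (d ≤ (i : ℕ) ∧ d ≤ (j : ℕ)) then lS i j else 0)
    -- the antipode axiom in the two diagonal blocks of L
    (hL1 : ∀ p m : Fin n, (p : ℕ) < d → (m : ℕ) < d →
      ∑ k ∈ Finset.univ.filter (fun k : Fin n => (k : ℕ) < d), lS p k * l k m =
        if p = m then 1 else 0)
    (hL2 : ∀ p m : Fin n, d ≤ (p : ℕ) → d ≤ (m : ℕ) →
      ∑ k ∈ Finset.univ.filter (fun k : Fin n => d ≤ (k : ℕ)), lS p k * l k m =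
        if p = m then 1 else 0) :
    ∀ i j : Fin n,
      ((Algebra.TensorProduct.map π (AlgHom.id ℂ H)).comp Δ)
          (∑ k ∈ Finset.univ.filter (fun k : Fin n => (k : ℕ) < d), gS i k * g k j)
        = 1 ⊗ₜ[ℂ] (∑ k ∈ Finset.univ.filter (fun k : Fin n => (k : ℕ) < d), gS i k * g k j) ∧
      ((Algebra.TensorProduct.map π (AlgHom.id ℂ H)).comp Δ)
          (∑ k ∈ Finset.univ.filter (fun k : Fin n => d ≤ (k : ℕ)), gS i k * g k j)
        = 1 ⊗ₜ[ℂ] (∑ k ∈ Finset.univ.filter (fun k : Fin n => d ≤ (k : ℕ)), gS i k * g k j) := by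
  intro i j
  refine ⟨map_comp_comul_sum_antipode_mul_of_blockDiagonal Δ π g gS l lS hΔg hΔgS
      (fun k => (k : ℕ) < d) ?_ ?_ hL1 i j,
    map_comp_comul_sum_antipode_mul_of_blockDiagonal Δ π g gS l lS hΔg hΔgS
      (fun k => d ≤ (k : ℕ)) ?_ ?_ hL2 i j⟩ <;>
  · intro a b hblock
    simp only [hπg, hπgS]
    split_ifs <;> first | rfl | omega

/-- let `H = Fun(GL(n))` with generators `g_{ij}` and antipode values
`gS_{ij} = S(g_{ij})`, and let `π : H → L = Fun(GL(d)×GL(n−d))` be the block projection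
(`π(g_{ij}) = l_{ij}` on the diagonal blocks and `0` otherwise).  With the left coaction
`Φ = (π ⊗ id) ∘ Δ`, the elements `η_{ij} = ∑_{k=1}^d S(g_{ik}) g_{kj}` and
`η^⊥_{ij} = ∑_{k=d+1}^n S(g_{ik}) g_{kj}` are left coinvariant: `Φ(η_{ij}) = 1 ⊗ η_{ij}` and
`Φ(η^⊥_{ij}) = 1 ⊗ η^⊥_{ij}`. -/
theorem eta_coinvariant {H L : Type*} [CommRing H] [Algebra ℂ H] [CommRing L] [Algebra ℂ L]
    {n : ℕ} (d : ℕ) (hd : d ≤ n)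
    (g gS : Fin n → Fin n → H) (l lS : Fin n → Fin n → L)
    (Δ : H →ₐ[ℂ] H ⊗[ℂ] H)
    (hΔg : ∀ i j, Δ (g i j) = ∑ k, g i k ⊗ₜ[ℂ] g k j)
    (hΔgS : ∀ i j, Δ (gS i j) = ∑ p, gS p j ⊗ₜ[ℂ] gS i p)
    (π : H →ₐ[ℂ] L)
    (hπg : ∀ i j, π (g i j) =
      if ((i : ℕ) < d ∧ (j : ℕ) < d) ∨ (d ≤ (i : ℕ) ∧ d ≤ (j : ℕ)) then l i j else 0)
    (hπgS : ∀ i j, π (gS i j) =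
      if ((i : ℕ) < d ∧ (j : ℕ) < d) ∨ (d ≤ (i : ℕ) ∧ d ≤ (j : ℕ)) then lS i j else 0)
    -- the antipode axiom in the two diagonal blocks of L
    (hL1 : ∀ p m : Fin n, (p : ℕ) < d → (m : ℕ) < d →
      ∑ k ∈ Finset.univ.filter (fun k : Fin n => (k : ℕ) < d), lS p k * l k m =
        if p = m then 1 else 0)
    (hL2 : ∀ p m : Fin n, d ≤ (p : ℕ) → d ≤ (m : ℕ) →
      ∑ k ∈ Finset.univ.filter (fun k : Fin n => d ≤ (k : ℕ)), lS p k * l k m =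
        if p = m then 1 else 0) :
    ∀ i j : Fin n,
      ((Algebra.TensorProduct.map π (AlgHom.id ℂ H)).comp Δ)
          (∑ k ∈ Finset.univ.filter (fun k : Fin n => (k : ℕ) < d), gS i k * g k j)
        = 1 ⊗ₜ[ℂ] (∑ k ∈ Finset.univ.filter (fun k : Fin n => (k : ℕ) < d), gS i k * g k j) ∧
      ((Algebra.TensorProduct.map π (AlgHom.id ℂ H)).comp Δ)
          (∑ k ∈ Finset.univ.filter (fun k : Fin n => d ≤ (k : ℕ)), gS i k * g k j)
        = 1 ⊗ₜ[ℂ] (∑ k ∈ Finset.univ.filter (fun k : Fin n => d ≤ (k : ℕ)), gS i k * g k j) :=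
  eta_coinvariant_general d g gS l lS Δ hΔg hΔgS π hπg hπgS hL1 hL2
end

section
/- Classical Plücker relations via Laplace expansion: let g = (g_{ij}) be a d×n matrix over a commutative ring, and for a column multi-index K of size d let Λ^K denote the corresponding d×d minor. Then for every multi-index I = (i₁,…,i_{d+1}) of size d+1 and every multi-index J of size d−1, one has ∑_{α=1}^{d+1} (−1)^{α+1} Λ^{I∖{i_α}} Λ^{(i_α)∪J} = 0, where (i_α)∪J denotes the d-index obtained by prepending i_α to J. -/
/-!
Expand `Λ^{(i_α)∪J}` along its first column: `Λ^{(i_α)∪J} = ∑_r (-1)^r g_{r,i_α} C_r`, where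
`C_r` is the minor of `g` with row `r` deleted on the columns `J`, independent of `α`. Exchanging
the sums, the coefficient of `C_r` is `∑_α (-1)^α g_{r,i_α} Λ^{I∖{i_α}}`, the first-row Laplace
expansion of the `(d+1)×(d+1)` minor on the columns `I` of `g` with its row `r` repeated on top,
which vanishes.
-/

/-- The `d×d` minor of the `d×n` matrix `g` on the columns selected by `K`. -/
def colMinor {R : Type*} [CommRing R] {d n : ℕ}
    (g : Fin d → Fin n → R) (K : Fin d → Fin n) : R :=
  (Matrix.of fun r c => g r (K c)).det

section colMinor

variable {R : Type*} [CommRing R] {d n : ℕ}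

theorem colMinor_cons_col (g : Fin (d + 1) → Fin n → R) (c : Fin n) (J : Fin d → Fin n) :
    colMinor g (Fin.cons c J) =
      ∑ r : Fin (d + 1), (-1 : R) ^ (r : ℕ) * g r c * colMinor (g ∘ r.succAbove) J :=
  Matrix.det_succ_column_zero _

theorem colMinor_cons_row (v : Fin n → R) (g : Fin d → Fin n → R) (I : Fin (d + 1) → Fin n) :
    colMinor (Fin.cons v g) I =
      ∑ α : Fin (d + 1), (-1 : R) ^ (α : ℕ) * v (I α) * colMinor g (I ∘ α.succAbove) :=
  Matrix.det_succ_row_zero _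

theorem colMinor_cons_self (g : Fin d → Fin n → R) (r : Fin d) (I : Fin (d + 1) → Fin n) :
    colMinor (Fin.cons (g r) g) I = 0 :=
  Matrix.det_zero_of_row_eq (Fin.succ_ne_zero r).symm rfl

end colMinor

/-- classical Plücker relations via Laplace expansion.  For a `d×n` matrix `g`
over a commutative ring (here `d = e+1`), for every column multi-index `I` of size `d+1` and
every column multi-index `J` of size `d−1`:
`∑_{α=1}^{d+1} (−1)^{α+1} Λ^{I∖{i_α}} Λ^{(i_α)∪J} = 0`. -/
theorem plucker_relations {R : Type*} [CommRing R] {e n : ℕ}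
    (g : Fin (e + 1) → Fin n → R)
    (I : Fin (e + 2) → Fin n) (J : Fin e → Fin n) :
    ∑ α : Fin (e + 2), (-1 : R) ^ (α : ℕ) *
        colMinor g (I ∘ α.succAbove) * colMinor g (Fin.cons (I α) J) = 0 := by
  calc ∑ α : Fin (e + 2), (-1 : R) ^ (α : ℕ) *
        colMinor g (I ∘ α.succAbove) * colMinor g (Fin.cons (I α) J)
      = ∑ r : Fin (e + 1), (-1 : R) ^ (r : ℕ) * colMinor (g ∘ r.succAbove) J *
          colMinor (Fin.cons (g r) g) I := by
        simp only [colMinor_cons_col, colMinor_cons_row, Finset.mul_sum]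
        rw [Finset.sum_comm]
        refine Finset.sum_congr rfl fun r _ => Finset.sum_congr rfl fun α _ => ?_
        ring
    _ = 0 := Finset.sum_eq_zero fun r _ => by rw [colMinor_cons_self, mul_zero]
end
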